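/- Duhamel's formula: let H(s) be a smooth (e.g. affine, H(s) = H₀ + sV) family of matrices and β ∈ ℝ. Then (d/ds) e^{−βH(s)} = −β ∫₀¹ (e^{−βH(s)})^τ (dH/ds) (e^{−βH(s)})^{1−τ} dτ, where for the affine family dH/ds = V and (e^{−βH(s)})^τ = e^{−τβH(s)}. -/

import Mathlib

/-!
`exp X - exp Y = ∫₀¹ e^{τX} (X - Y) e^{(1-τ)Y} dτ` is the fundamental theorem of calculus for
`τ ↦ e^{τX} e^{(1-τ)Y}` on `[0, 1]`. With `X = A + u B` and `Y = A + s B` this writes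
`e^{A+uB} - e^{A+sB}` as `u - s` times an integral that is continuous in `u`; its value at
`u = s` is therefore the derivative. The argument works in any real Banach algebra. Complex
matrices are one under the ℓ∞-operator norm, and passing to that equivalent norm changes
neither derivatives nor integrals.
-/

open Matrix intervalIntegral NormedSpace

attribute [local instance] Matrix.normedAddCommGroup Matrix.normedSpace

variable {n : Type*} [Fintype n] [DecidableEq n]

theorem hasDerivAt_of_sub_eq_smul {𝕜 E : Type*} [NontriviallyNormedField 𝕜]
    [NormedAddCommGroup E] [NormedSpace 𝕜 E] {f g : 𝕜 → E} {s : 𝕜}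
    (hfg : ∀ u, f u - f s = (u - s) • g u) (hg : ContinuousAt g s) : HasDerivAt f (g s) s := by
  refine hasDerivAt_iff_tendsto_slope.2 (hg.tendsto.mono_left nhdsWithin_le_nhds |>.congr' ?_)
  filter_upwards [self_mem_nhdsWithin] with u hu
  rw [slope_def_module, hfg, smul_smul, inv_mul_cancel₀ (sub_ne_zero.2 hu), one_smul]

section BanachAlgebra

variable {𝔸 : Type*} [NormedRing 𝔸] [NormedAlgebra ℝ 𝔸] [CompleteSpace 𝔸]

theorem hasDerivAt_exp_smul_mul_exp_one_sub_smul (X Y : 𝔸) (t : ℝ) :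
    HasDerivAt (fun τ : ℝ => exp (τ • X) * exp ((1 - τ) • Y))
      (exp (t • X) * (X - Y) * exp ((1 - t) • Y)) t := by
  have hY := (hasDerivAt_exp_smul_const' Y (1 - t)).scomp t ((hasDerivAt_id t).const_sub 1)
  refine ((hasDerivAt_exp_smul_const X t).mul hY).congr_deriv ?_
  simp only [Function.comp_apply, neg_one_smul, mul_neg]
  noncomm_ring

theorem exp_sub_exp_eq_integral (X Y : 𝔸) :
    exp X - exp Y = ∫ τ in (0 : ℝ)..1, exp (τ • X) * (X - Y) * exp ((1 - τ) • Y) := by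
  let +nondep : NormedAlgebra ℚ 𝔸 := .restrictScalars ℚ ℝ 𝔸
  rw [integral_eq_sub_of_hasDerivAt (fun t _ => hasDerivAt_exp_smul_mul_exp_one_sub_smul X Y t)
    ((by fun_prop : Continuous _).intervalIntegrable 0 1)]
  simp

theorem hasDerivAt_exp_add_smul (A B : 𝔸) (s : ℝ) :
    HasDerivAt (fun u : ℝ => exp (A + u • B))
      (∫ τ in (0 : ℝ)..1, exp (τ • (A + s • B)) * B * exp ((1 - τ) • (A + s • B))) s := by
  let +nondep : NormedAlgebra ℚ 𝔸 := .restrictScalars ℚ ℝ 𝔸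
  refine hasDerivAt_of_sub_eq_smul (g := fun u =>
    ∫ τ in (0 : ℝ)..1, exp (τ • (A + u • B)) * B * exp ((1 - τ) • (A + s • B))) (fun u => ?_) ?_
  · rw [exp_sub_exp_eq_integral, ← intervalIntegral.integral_smul]
    congr 1 with τ
    rw [add_sub_add_left_eq_sub, ← sub_smul, mul_smul_comm, smul_mul_assoc]
  · exact (continuous_parametric_intervalIntegral_of_continuous' (by fun_prop) 0 1).continuousAt

end BanachAlgebra

namespace Matrix

variable {l m 𝕜 : Type*} [Fintype l] [Fintype m] [RCLike 𝕜]

@[fun_prop]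
theorem continuous_exp : Continuous (exp : Matrix n n 𝕜 → Matrix n n 𝕜) :=
  @exp_continuous _ Matrix.linftyOpNormedRing
    (@NormedAlgebra.restrictScalars ℚ ℝ _ _ _ _ Matrix.linftyOpSemiNormedRing
      Matrix.linftyOpNormedAlgebra)
    (FiniteDimensional.complete ℝ _)

open MeasureTheory in
theorem intervalIntegral_linftyOp_eq {f : ℝ → Matrix l m 𝕜} (hf : Continuous f) (a b : ℝ) :
    @intervalIntegral _ Matrix.linftyOpNormedAddCommGroup Matrix.linftyOpNormedSpace f a b volume =
      ∫ x in a..b, f x :=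
  @ContinuousLinearMap.intervalIntegral_comp_comm ℝ (Matrix l m 𝕜) (Matrix l m 𝕜) _ _ a b volume
    f _ _ Matrix.linftyOpNormedAddCommGroup Matrix.linftyOpNormedSpace Matrix.linftyOpNormedSpace
    (FiniteDimensional.complete ℝ _) _ (ContinuousLinearMap.id ℝ _) (hf.intervalIntegrable a b)

-- `HasDerivAt` only sees the topology, which the ℓ∞-operator norm shares with the entrywise one.
theorem hasDerivAt_exp_add_smul (A B : Matrix n n 𝕜) (s : ℝ) :
    HasDerivAt (fun u : ℝ => exp (A + u • B))
      (∫ τ in (0 : ℝ)..1, exp (τ • (A + s • B)) * B * exp ((1 - τ) • (A + s • B))) s :=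
  (@_root_.hasDerivAt_exp_add_smul _ Matrix.linftyOpNormedRing Matrix.linftyOpNormedAlgebra
    (FiniteDimensional.complete ℝ _) A B s).congr_deriv
    (intervalIntegral_linftyOp_eq (by fun_prop) 0 1)

end Matrix

theorem stmt10_general (H₀ V : Matrix n n ℂ) (β : ℝ) (s : ℝ) :
    HasDerivAt (fun s : ℝ => NormedSpace.exp ((-(β : ℂ)) • (H₀ + (s : ℂ) • V)))
      ((-(β : ℂ)) • ∫ τ in (0:ℝ)..1,
        NormedSpace.exp ((-(τ * β) : ℂ) • (H₀ + (s : ℂ) • V)) * V *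
          NormedSpace.exp ((-((1 - τ) * β) : ℂ) • (H₀ + (s : ℂ) • V))) s := by
  have affine (u : ℝ) :
      (-(β : ℂ)) • (H₀ + (u : ℂ) • V) = (-(β : ℂ)) • H₀ + u • (-(β : ℂ)) • V := by
    rw [smul_add, smul_comm, Complex.coe_smul]
  have rescale (τ : ℝ) :
      τ • (-(β : ℂ)) • (H₀ + (s : ℂ) • V) = (-(τ * β) : ℂ) • (H₀ + (s : ℂ) • V) := by
    rw [← Complex.coe_smul, smul_smul]
    ring_nf
  convert Matrix.hasDerivAt_exp_add_smul ((-(β : ℂ)) • H₀) ((-(β : ℂ)) • V) s using 1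
  · simp only [affine]
  · rw [← affine, ← intervalIntegral.integral_smul]
    congr 1 with τ
    rw [rescale, rescale, Complex.ofReal_sub, Complex.ofReal_one, mul_smul_comm, smul_mul_assoc]

/-- Duhamel's formula for the affine family `H(s) = H₀ + s V`:
`(d/ds) e^{−βH(s)} = −β ∫₀¹ e^{−τβH(s)} V e^{−(1−τ)βH(s)} dτ`. -/
theorem stmt10 (H₀ V : Matrix n n ℂ) (hH₀ : H₀.IsHermitian) (hV : V.IsHermitian)
    (β : ℝ) (s : ℝ) :
    HasDerivAt (fun s : ℝ => NormedSpace.exp ((-(β : ℂ)) • (H₀ + (s : ℂ) • V)))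
      ((-(β : ℂ)) • ∫ τ in (0:ℝ)..1,
        NormedSpace.exp ((-(τ * β) : ℂ) • (H₀ + (s : ℂ) • V)) * V *
          NormedSpace.exp ((-((1 - τ) * β) : ℂ) • (H₀ + (s : ℂ) • V))) s :=
  stmt10_general H₀ V β s
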